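/- Simplex integral formula: for every h > -1, every t > 0, and every n ≥ 1, the integral over the simplex T_n(t) = {(s_1,…,s_n) : 0 < s_1 < ⋯ < s_n < t} of the product [(t - s_n)(s_n - s_{n-1}) ⋯ (s_2 - s_1)]^h equals Γ(1+h)^n · t^{n(1+h)} / Γ(n(1+h)+1). -/

import Mathlib

/-!
Integrating out the largest point `s_n = x` first gives `I_{n+1}(t) = ∫₀ᵗ (t - x)^h I_n(x) dx`
with `I_0 = 1`. If `I_n(x) = C_n x^{n(1+h)}`, each step is a Beta integral
`∫₀ᵗ x^a (t - x)^h dx = B(a + 1, 1 + h) t^{a + 1 + h}`, and the Gamma factors telescope.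
Working with the lower Lebesgue integral lets Tonelli apply without integrability conditions.
-/

open MeasureTheory Set

open ProbabilityTheory in
theorem lintegral_Ioo_rpow_mul_one_sub_rpow {α β : ℝ} (hα : 0 < α) (hβ : 0 < β) :
    ∫⁻ x in Ioo 0 1, ENNReal.ofReal (x ^ (α - 1) * (1 - x) ^ (β - 1)) =
      ENNReal.ofReal (beta α β) := by
  have hB := beta_pos hα hβ
  have h1 := lintegral_betaPDF_eq_one hα hβ
  rw [lintegral_betaPDF] at h1
  simp_rw [mul_assoc, ENNReal.ofReal_mul (one_div_pos.2 hB).le] at h1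
  rw [lintegral_const_mul' _ _ ENNReal.ofReal_ne_top, one_div, ENNReal.ofReal_inv_of_pos hB,
    mul_comm] at h1
  rw [ENNReal.eq_inv_of_mul_eq_one_left h1, inv_inv]

open ProbabilityTheory in
theorem lintegral_Ioo_rpow_mul_sub_rpow {α β t : ℝ} (hα : 0 < α) (hβ : 0 < β) (ht : 0 < t) :
    ∫⁻ x in Ioo 0 t, ENNReal.ofReal (x ^ (α - 1) * (t - x) ^ (β - 1)) =
      ENNReal.ofReal (beta α β * t ^ (α + β - 1)) := by
  have himage : (t * ·) '' Ioo 0 1 = Ioo 0 t := by simp [image_mul_left_Ioo ht]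
  rw [← himage, lintegral_image_eq_lintegral_abs_deriv_mul (f' := fun _ => t) measurableSet_Ioo
    (fun x _ => by simpa using ((hasDerivAt_id x).const_mul t).hasDerivWithinAt)
    (mul_right_injective₀ ht.ne').injOn]
  have hscale : ∀ y ∈ Ioo (0 : ℝ) 1, ENNReal.ofReal |t| *
      ENNReal.ofReal ((t * y) ^ (α - 1) * (t - t * y) ^ (β - 1)) =
        ENNReal.ofReal (t ^ (α + β - 1)) * ENNReal.ofReal (y ^ (α - 1) * (1 - y) ^ (β - 1)) := by
    rintro y ⟨hy0, hy1⟩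
    rw [← ENNReal.ofReal_mul (abs_nonneg _), ← ENNReal.ofReal_mul (by positivity),
      show t - t * y = t * (1 - y) by ring, Real.mul_rpow ht.le hy0.le,
      Real.mul_rpow ht.le (sub_pos.2 hy1).le, abs_of_pos ht,
      show α + β - 1 = 1 + (α - 1) + (β - 1) by ring, Real.rpow_add ht, Real.rpow_add ht,
      Real.rpow_one]
    ring_nf
  rw [setLIntegral_congr_fun measurableSet_Ioo hscale,
    lintegral_const_mul' _ _ ENNReal.ofReal_ne_top, lintegral_Ioo_rpow_mul_one_sub_rpow hα hβ,
    ← ENNReal.ofReal_mul (by positivity), mul_comm]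

theorem lintegral_eq_lintegral_lintegral_snoc {α : Type*} [MeasureSpace α]
    [SigmaFinite (volume : Measure α)] {n : ℕ} {f : (Fin (n + 1) → α) → ENNReal}
    (hf : Measurable f) :
    ∫⁻ s, f s = ∫⁻ x, ∫⁻ u, f (Fin.snoc u x) := by
  have e := (volume_preserving_piFinSuccAbove (fun _ : Fin (n + 1) => α) (Fin.last n)).symm
  rw [← e.lintegral_comp hf, Measure.volume_eq_prod]
  exact (lintegral_prod _ (hf.comp e.measurable).aemeasurable).trans (by simp [Fin.snocEquiv])

def simplex (n : ℕ) (t : ℝ) : Set (Fin n → ℝ) :=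
  {s | (∀ i, 0 < s i) ∧ (∀ i j : Fin n, i < j → s i < s j) ∧ ∀ i, s i < t}

/-- `Fin.snoc s t i.succ` is the successor `s_{i+1}` of `s_i`, with `s_{n+1} = t`. -/
noncomputable def gapProd {n : ℕ} (h t : ℝ) (s : Fin n → ℝ) : ℝ :=
  ∏ i : Fin n, ((Fin.snoc s t : Fin (n + 1) → ℝ) i.succ - s i) ^ h

theorem measurableSet_simplex (n : ℕ) (t : ℝ) : MeasurableSet (simplex n t) := by
  unfold simplex
  measurability

theorem measurable_gapProd (n : ℕ) (h t : ℝ) : Measurable (gapProd (n := n) h t) := by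
  unfold gapProd
  fun_prop

theorem snoc_mem_simplex_iff {n : ℕ} {t x : ℝ} {u : Fin n → ℝ} :
    (Fin.snoc u x : Fin (n + 1) → ℝ) ∈ simplex (n + 1) t ↔ x ∈ Ioo 0 t ∧ u ∈ simplex n x := by
  simp only [simplex, mem_ofPred_eq, mem_Ioo, Fin.forall_fin_succ', Fin.snoc_castSucc,
    Fin.snoc_last, Fin.castSucc_lt_castSucc_iff, Fin.castSucc_lt_last, true_implies, lt_irrefl,
    false_implies, and_true]
  constructor
  · rintro ⟨⟨hu0, hx0⟩, ⟨hmono, -⟩, -, hxt⟩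
    exact ⟨⟨hx0, hxt⟩, hu0, fun i j hij => (hmono i).1 j hij, fun i => (hmono i).2⟩
  · rintro ⟨⟨hx0, hxt⟩, hu0, hmono, hux⟩
    exact ⟨⟨hu0, hx0⟩, ⟨fun i => ⟨hmono i, hux i⟩, fun i hi => absurd hi (Fin.le_last _).not_gt⟩,
      fun i => (hux i).trans hxt, hxt⟩

theorem gapProd_snoc {n : ℕ} (h t x : ℝ) (u : Fin n → ℝ) :
    gapProd h t (Fin.snoc u x : Fin (n + 1) → ℝ) = gapProd h x u * (t - x) ^ h := by
  simp only [gapProd, Fin.prod_univ_castSucc, Fin.succ_castSucc, Fin.snoc_castSucc, Fin.succ_last,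
    Fin.snoc_last]

theorem lt_snoc_succ_of_mem_simplex {n : ℕ} {t : ℝ} {s : Fin n → ℝ} (hs : s ∈ simplex n t)
    (i : Fin n) : s i < (Fin.snoc s t : Fin (n + 1) → ℝ) i.succ := by
  obtain ⟨-, hmono, hlt⟩ := hs
  simp only [Fin.snoc, Fin.val_succ]
  split_ifs
  · exact hmono _ _ (Fin.lt_def.2 (by simp))
  · exact hlt i

theorem gapProd_nonneg {n : ℕ} (h : ℝ) {t : ℝ} {s : Fin n → ℝ} (hs : s ∈ simplex n t) :
    0 ≤ gapProd h t s :=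
  Finset.prod_nonneg fun i _ =>
    Real.rpow_nonneg (sub_nonneg.2 (lt_snoc_succ_of_mem_simplex hs i).le) h

theorem lintegral_simplex_succ (n : ℕ) (h t : ℝ) :
    ∫⁻ s in simplex (n + 1) t, ENNReal.ofReal (gapProd h t s) =
      ∫⁻ x in Ioo 0 t, ENNReal.ofReal ((t - x) ^ h) *
        ∫⁻ u in simplex n x, ENNReal.ofReal (gapProd h x u) := by
  rw [← lintegral_indicator (measurableSet_simplex _ _), ← lintegral_indicator measurableSet_Ioo,
    lintegral_eq_lintegral_lintegral_snoc ((measurable_gapProd _ h t).ennreal_ofReal.indicator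
      (measurableSet_simplex _ _))]
  refine lintegral_congr fun x => ?_
  by_cases hx : x ∈ Ioo 0 t
  · rw [indicator_of_mem hx, ← lintegral_indicator (measurableSet_simplex _ _),
      ← lintegral_const_mul' _ _ ENNReal.ofReal_ne_top]
    refine lintegral_congr fun u => ?_
    by_cases hu : u ∈ simplex n x
    · rw [indicator_of_mem (snoc_mem_simplex_iff.2 ⟨hx, hu⟩), indicator_of_mem hu, gapProd_snoc,
        ENNReal.ofReal_mul' (Real.rpow_nonneg (sub_pos.2 hx.2).le h), mul_comm]
    · rw [indicator_of_notMem (fun hs => hu (snoc_mem_simplex_iff.1 hs).2),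
        indicator_of_notMem hu, mul_zero]
  · simp [indicator_of_notMem hx, indicator_of_notMem (fun hs => hx (snoc_mem_simplex_iff.1 hs).1)]

theorem lintegral_simplex {h : ℝ} (hh : -1 < h) (n : ℕ) {t : ℝ} (ht : 0 < t) :
    ∫⁻ s in simplex n t, ENNReal.ofReal (gapProd h t s) =
      ENNReal.ofReal (Real.Gamma (1 + h) ^ n * t ^ ((n : ℝ) * (1 + h)) /
        Real.Gamma ((n : ℝ) * (1 + h) + 1)) := by
  induction n generalizing t with
  | zero => simp [simplex, gapProd, volume_pi]
  | succ n ih =>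
    set a : ℝ := n * (1 + h)
    have ha : 0 ≤ a := mul_nonneg n.cast_nonneg (by linarith)
    have hΓh : 0 < Real.Gamma (1 + h) := Real.Gamma_pos_of_pos (by linarith)
    have hΓa : 0 < Real.Gamma (a + 1) := Real.Gamma_pos_of_pos (by linarith)
    have hstep : ∀ x ∈ Ioo 0 t, ENNReal.ofReal ((t - x) ^ h) *
        ∫⁻ u in simplex n x, ENNReal.ofReal (gapProd h x u) =
          ENNReal.ofReal (Real.Gamma (1 + h) ^ n / Real.Gamma (a + 1)) *
            ENNReal.ofReal (x ^ (a + 1 - 1) * (t - x) ^ (1 + h - 1)) := by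
      rintro x ⟨hx0, hxt⟩
      rw [ih hx0, ← ENNReal.ofReal_mul (Real.rpow_nonneg (sub_pos.2 hxt).le h),
        ← ENNReal.ofReal_mul (by positivity), add_sub_cancel_right, add_sub_cancel_left]
      ring_nf
    rw [lintegral_simplex_succ, setLIntegral_congr_fun measurableSet_Ioo hstep,
      lintegral_const_mul' _ _ ENNReal.ofReal_ne_top,
      lintegral_Ioo_rpow_mul_sub_rpow (by positivity) (by linarith) ht,
      ← ENNReal.ofReal_mul (by positivity)]
    congr 1
    have hexp : a + 1 + (1 + h) - 1 = (↑(n + 1) : ℝ) * (1 + h) := by push_cast; ring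
    rw [ProbabilityTheory.beta, hexp,
      show a + 1 + (1 + h) = (↑(n + 1) : ℝ) * (1 + h) + 1 by linarith]
    field_simp
    ring

theorem simplex_integral_general (n : ℕ) (h t : ℝ) (hh : -1 < h) (ht : 0 < t) :
    (∫ s : Fin n → ℝ in
        {s : Fin n → ℝ | (∀ i, 0 < s i) ∧ (∀ i j : Fin n, i < j → s i < s j) ∧ ∀ i, s i < t},
      ∏ i : Fin n,
        ((if hi : (i : ℕ) + 1 < n then s ⟨(i : ℕ) + 1, hi⟩ else t) - s i) ^ h)
      = Real.Gamma (1 + h) ^ n * t ^ ((n : ℝ) * (1 + h))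
          / Real.Gamma ((n : ℝ) * (1 + h) + 1) := by
  have hnonneg : 0 ≤ᵐ[volume.restrict (simplex n t)] gapProd h t :=
    (ae_restrict_iff' (measurableSet_simplex n t)).2 (.of_forall fun _ => gapProd_nonneg h)
  have hΓh : 0 < Real.Gamma (1 + h) := Real.Gamma_pos_of_pos (by linarith)
  have hΓ : 0 < Real.Gamma ((n : ℝ) * (1 + h) + 1) :=
    Real.Gamma_pos_of_pos (by nlinarith [(n.cast_nonneg : (0 : ℝ) ≤ n)])
  change ∫ s in simplex n t, gapProd h t s = _
  rw [integral_eq_lintegral_of_nonneg_ae hnonneg (measurable_gapProd n h t).aestronglyMeasurable,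
    lintegral_simplex hh n ht, ENNReal.toReal_ofReal (by positivity)]

theorem simplex_integral (n : ℕ) (hn : 1 ≤ n) (h t : ℝ) (hh : -1 < h) (ht : 0 < t) :
    (∫ s : Fin n → ℝ in
        {s : Fin n → ℝ | (∀ i, 0 < s i) ∧ (∀ i j : Fin n, i < j → s i < s j) ∧ ∀ i, s i < t},
      ∏ i : Fin n,
        ((if hi : (i : ℕ) + 1 < n then s ⟨(i : ℕ) + 1, hi⟩ else t) - s i) ^ h)
      = Real.Gamma (1 + h) ^ n * t ^ ((n : ℝ) * (1 + h))
          / Real.Gamma ((n : ℝ) * (1 + h) + 1) :=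
  simplex_integral_general n h t hh ht
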